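/- Under the Protocol 1 model: for any attack (U_E, {U_F^{(r)}}) satisfying the no-error conditions (T'), (Z') and (X'), with E_i and F_{s,i} the associated unit vectors, if two bitstrings i and i' agree at every position outside the range of an injective map s : Fin r ↪ Fin N (i.e. i∘s̄ = i'∘s̄), then F_{s,i} = F_{s,i'}. -/

import Mathlib

/-!
Protocol 1 model (randomization-based semi-quantum key distribution):
see Boyer, Gelles, Kenigsberg, Mor, "Semi-Quantum Key Distribution".
-/

namespace SQKD1

/-- Bitstrings of length `N`. -/
abbrev Bits (N : ℕ) := Fin N → Bool

/-- The space attacked by `U_E`: Eve's probe together with the `N` travelling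
qubits. -/
abbrev HE (N d : ℕ) := EuclideanSpace ℂ (Fin d × Bits N)

/-- The space attacked by `U_F^{(r)}`: Eve's probe together with the `r`
reflected qubits. -/
abbrev HF (d r : ℕ) := EuclideanSpace ℂ (Fin d × (Fin r → Bool))

/-- Hamming weight of a bitstring. -/
def wt {n : ℕ} (y : Fin n → Bool) : ℕ := (Finset.univ.filter fun k => y k = true).card

/-- The elementary tensor `v ⊗ δ_u` of a vector `v` of Eve's probe space with a
standard basis vector `δ_u`. -/
noncomputable def tprod {d : ℕ} {ι : Type*} [DecidableEq ι]
    (v : EuclideanSpace ℂ (Fin d)) (u : ι) : EuclideanSpace ℂ (Fin d × ι) :=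
  WithLp.toLp 2 (fun p : Fin d × ι => if p.2 = u then v p.1 else 0)

/-- Condition (T'): no error on TEST bits; `U_E (ε₀ ⊗ δ_i) = E_i ⊗ δ_i`. -/
def CondT {N d : ℕ} (hd : 0 < d) (UE : HE N d ≃ₗᵢ[ℂ] HE N d)
    (E : Bits N → EuclideanSpace ℂ (Fin d)) : Prop :=
  ∀ i : Bits N,
    UE (EuclideanSpace.single ((⟨0, hd⟩ : Fin d), i) 1) = tprod (E i) i

/-- Condition (Z'): no error on Z-CTRL bits;
`U_F^{(r)} (E_i ⊗ δ_{i∘s}) = F_{s,i} ⊗ δ_{i∘s}`. -/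
def CondZ {N d : ℕ} (UF : (r : ℕ) → r ≤ N → (HF d r ≃ₗᵢ[ℂ] HF d r))
    (E : Bits N → EuclideanSpace ℂ (Fin d))
    (F : (r : ℕ) → r ≤ N → (Fin r ↪ Fin N) → Bits N → EuclideanSpace ℂ (Fin d)) :
    Prop :=
  ∀ (r : ℕ) (hr : r ≤ N) (s : Fin r ↪ Fin N) (i : Bits N),
    UF r hr (tprod (E i) (fun p => i (s p))) = tprod (F r hr s i) (fun p => i (s p))

/-- Condition (X'): no error on X-CTRL bits.  For `k := s p`, `i k = false` and
`i'` equal to `i` with bit `k` flipped, the state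
`Φ = (1/√2)(F_{s,i} ⊗ δ_{i∘s} + F_{s,i'} ⊗ δ_{i'∘s})` has, at every index
`(a,t)`, the same coefficient as at `(a, t')`, where `t'` is `t` with bit `p`
flipped. -/
def CondX {N d : ℕ}
    (F : (r : ℕ) → r ≤ N → (Fin r ↪ Fin N) → Bits N → EuclideanSpace ℂ (Fin d)) :
    Prop :=
  ∀ (r : ℕ) (hr : r ≤ N) (s : Fin r ↪ Fin N) (p : Fin r) (i : Bits N),
    i (s p) = false →
      ∀ (a : Fin d) (t : Fin r → Bool),
        ((Real.sqrt 2 : ℂ)⁻¹ •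
            (tprod (F r hr s i) (fun q => i (s q)) +
              tprod (F r hr s (Function.update i (s p) true))
                (fun q => Function.update i (s p) true (s q)))) (a, t) =
        ((Real.sqrt 2 : ℂ)⁻¹ •
            (tprod (F r hr s i) (fun q => i (s q)) +
              tprod (F r hr s (Function.update i (s p) true))
                (fun q => Function.update i (s p) true (s q))))
          (a, Function.update t p (!(t p)))

/-!
Condition (X') compares the coefficients of `Φ` at `(a, i∘s)` and at `(a, i'∘s)`, where `i'` is
`i` with one reflected bit raised; only the first summand of `Φ` contributes at the first index
and only the second at the other, so `F_{s,i} = F_{s,i'}`. Raising the reflected bits one at a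
time, `F_{s,i}` equals `F_{s,j}` for the bitstring `j` that has every reflected bit set and agrees
with `i` elsewhere, and that `j` is the same for any two bitstrings agreeing off the range of `s`.
-/

section Invariance

variable {ι β : Type*} [DecidableEq ι] {f : (ι → Bool) → β} {T : Finset ι}

theorem apply_piecewise_true_eq
    (hf : ∀ j, ∀ k ∈ T, j k = false → f (Function.update j k true) = f j) (j : ι → Bool) :
    f (T.piecewise (fun _ => true) j) = f j := by
  refine Finset.induction_on' (motive := fun U => f (U.piecewise (fun _ => true) j) = f j) T
    (by rw [Finset.piecewise_empty]) fun a U ha _ _ ih => ?_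
  rw [Finset.piecewise_insert, ← ih]
  cases hk : U.piecewise (fun _ => true) j a with
  | false => exact hf _ _ ha hk
  | true => rw [Function.update_eq_self_iff.mpr hk.symm]

theorem apply_eq_of_forall_notMem_eq
    (hf : ∀ j, ∀ k ∈ T, j k = false → f (Function.update j k true) = f j)
    {i i' : ι → Bool} (hii' : ∀ k ∉ T, i k = i' k) : f i = f i' := by
  have hraised : T.piecewise (fun _ => true) i = T.piecewise (fun _ => true) i' := by
    funext k
    by_cases hk : k ∈ T
    · simp only [Finset.piecewise_eq_of_mem _ _ _ hk]
    · simp only [Finset.piecewise_eq_of_notMem _ _ _ hk, hii' k hk]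
  rw [← apply_piecewise_true_eq hf i, hraised, apply_piecewise_true_eq hf i']

end Invariance

theorem tprod_apply_self {d : ℕ} {ι : Type*} [DecidableEq ι]
    (v : EuclideanSpace ℂ (Fin d)) (u : ι) (a : Fin d) : tprod v u (a, u) = v a :=
  if_pos rfl

theorem tprod_apply_of_ne {d : ℕ} {ι : Type*} [DecidableEq ι]
    (v : EuclideanSpace ℂ (Fin d)) {u t : ι} (h : t ≠ u) (a : Fin d) : tprod v u (a, t) = 0 :=
  if_neg h

theorem CondX.F_update_true_eq {N d : ℕ}
    {F : (r : ℕ) → r ≤ N → (Fin r ↪ Fin N) → Bits N → EuclideanSpace ℂ (Fin d)}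
    (hX : CondX F) {r : ℕ} (hr : r ≤ N) (s : Fin r ↪ Fin N) {p : Fin r} {i : Bits N}
    (hi : i (s p) = false) :
    F r hr s (Function.update i (s p) true) = F r hr s i := by
  ext a
  have hcomp : (fun q => Function.update i (s p) true (s q)) =
      Function.update (fun q => i (s q)) p true :=
    Function.update_comp_eq_of_injective' i s.injective p true
  have hne : (fun q => i (s q)) ≠ Function.update (fun q => i (s q)) p true := fun h => by
    simpa [hi] using congrFun h p
  have hcoeff := hX r hr s p i hi a (fun q => i (s q))
  rw [hcomp, hi, Bool.not_false] at hcoeff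
  simp only [PiLp.smul_apply, PiLp.add_apply, tprod_apply_self, tprod_apply_of_ne _ hne,
    tprod_apply_of_ne _ hne.symm, add_zero, zero_add, smul_eq_mul] at hcoeff
  have hc : ((Real.sqrt 2 : ℂ)⁻¹) ≠ 0 := by simp
  exact (mul_left_cancel₀ hc hcoeff).symm

theorem protocol1_F_depends_only_on_kept_bits_general (N d : ℕ)
    (F : (r : ℕ) → r ≤ N → (Fin r ↪ Fin N) → Bits N → EuclideanSpace ℂ (Fin d))
    (hX : CondX F) :
    ∀ (r : ℕ) (hr : r ≤ N) (s : Fin r ↪ Fin N) (i i' : Bits N),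
      (∀ k : Fin N, k ∉ Set.range ⇑s → i k = i' k) →
      F r hr s i = F r hr s i' := by
  intro r hr s i i' hagree
  have hraise : ∀ j, ∀ k ∈ Finset.univ.map s, j k = false →
      F r hr s (Function.update j k true) = F r hr s j := by
    intro j k hk hj
    obtain ⟨p, -, rfl⟩ := Finset.mem_map.mp hk
    exact hX.F_update_true_eq hr s hj
  exact apply_eq_of_forall_notMem_eq hraise fun k hk => hagree k (by simpa using hk)

/-- **Lemma 1 of the paper.** For an attack with no error on TEST
and CTRL bits, if two bitstrings `i`, `i'` agree at every position outside the
range of `s`, then `F_{s,i} = F_{s,i'}`. -/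
theorem protocol1_F_depends_only_on_kept_bits (N d : ℕ) (hd : 0 < d)
    (UE : HE N d ≃ₗᵢ[ℂ] HE N d)
    (UF : (r : ℕ) → r ≤ N → (HF d r ≃ₗᵢ[ℂ] HF d r))
    (E : Bits N → EuclideanSpace ℂ (Fin d))
    (F : (r : ℕ) → r ≤ N → (Fin r ↪ Fin N) → Bits N → EuclideanSpace ℂ (Fin d))
    (hT : CondT hd UE E) (hZ : CondZ UF E F) (hX : CondX F) :
    ∀ (r : ℕ) (hr : r ≤ N) (s : Fin r ↪ Fin N) (i i' : Bits N),
      (∀ k : Fin N, k ∉ Set.range ⇑s → i k = i' k) →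
      F r hr s i = F r hr s i' :=
  protocol1_F_depends_only_on_kept_bits_general N d F hX

end SQKD1
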